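/- arXiv:2106.15360 — 3 statements merged into one kernel-verified Lean document; each statement's English description precedes it below -/
import Mathlib

section
/- Let w_1, …, w_m ∈ ℝ^d, x ∈ ℝ^d, y ∈ {−1,1}^m and ε ≥ 0. Then the worst-case multi-label hinge loss under an ℓ₂-bounded input perturbation satisfies sup over r ∈ ℝ^d with ‖r‖₂ ≤ ε of ∑_{j=1}^m max(0, 1 − y_j ⟨w_j, x + r⟩) ≤ ∑_{j=1}^m max(0, 1 − y_j ⟨w_j, x⟩) + ε · max over b ∈ {0,1}^m of ‖∑_{j=1}^m b_j y_j w_j‖₂. -/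
open scoped RealInnerProductSpace BigOperators

/-!
Perturbing the input by `r` shifts the `j`-th margin by `y j * ⟪w j, r⟫`, and since `t ↦ max 0 t`
is subadditive the hinge loss grows by at most `max 0 ⟪y j • w j, -r⟫` per label. The labels whose
term is positive form a selection `b`, so the total growth is `⟪∑ j, b j • y j • w j, -r⟫`, which
Cauchy–Schwarz bounds by `‖r‖ · C_{W,z} ≤ ε · C_{W,z}`.
-/

lemma max_zero_add_le_max_zero_add_max_zero {α : Type*} [AddCommMonoid α] [LinearOrder α]
    [IsOrderedAddMonoid α] (a b : α) : max 0 (a + b) ≤ max 0 a + max 0 b :=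
  max_le (add_nonneg (le_max_left _ _) (le_max_left _ _))
    (add_le_add (le_max_right _ _) (le_max_right _ _))

section InnerProductSpace

variable {E ι : Type*} [NormedAddCommGroup E] [InnerProductSpace ℝ E] [Fintype ι]

lemma max_zero_one_sub_mul_inner_add_le (w x r : E) (y : ℝ) :
    max 0 (1 - y * ⟪w, x + r⟫) ≤ max 0 (1 - y * ⟪w, x⟫) + max 0 ⟪y • w, -r⟫ := by
  have hsplit : 1 - y * ⟪w, x + r⟫ = (1 - y * ⟪w, x⟫) + ⟪y • w, -r⟫ := by
    rw [inner_add_right, real_inner_smul_left, inner_neg_right]; ring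
  rw [hsplit]
  exact max_zero_add_le_max_zero_add_max_zero _ _

lemma sum_max_zero_inner_eq_inner_sum_ite (v : ι → E) (r : E) :
    ∑ j, max 0 ⟪v j, r⟫ = ⟪∑ j, if 0 < ⟪v j, r⟫ then v j else 0, r⟫ := by
  rw [sum_inner]
  refine Finset.sum_congr rfl fun j _ => ?_
  split_ifs with h
  · exact max_eq_right h.le
  · rw [inner_zero_left]; exact max_eq_left (not_lt.mp h)

lemma sum_max_zero_inner_le_norm_mul_iSup (v : ι → E) (r : E) :
    ∑ j, max 0 ⟪v j, r⟫ ≤ ‖r‖ * ⨆ b : ι → Bool, ‖∑ j, if b j then v j else 0‖ := by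
  set b : ι → Bool := fun j => decide (0 < ⟪v j, r⟫)
  have hsum : ∑ j, max 0 ⟪v j, r⟫ = ⟪∑ j, if b j then v j else 0, r⟫ := by
    simpa [b] using sum_max_zero_inner_eq_inner_sum_ite v r
  have hbdd : BddAbove (Set.range fun b : ι → Bool => ‖∑ j, if b j then v j else 0‖) :=
    (Set.finite_range _).bddAbove
  calc ∑ j, max 0 ⟪v j, r⟫ = ⟪∑ j, if b j then v j else 0, r⟫ := hsum
    _ ≤ ‖∑ j, if b j then v j else 0‖ * ‖r‖ := real_inner_le_norm _ _
    _ ≤ (⨆ b : ι → Bool, ‖∑ j, if b j then v j else 0‖) * ‖r‖ := by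
      gcongr; exact le_ciSup hbdd b
    _ = _ := mul_comm _ _

end InnerProductSpace

theorem adversarial_hinge_loss_le_clean_add_transferability_general
    {d m : ℕ} (w : Fin m → EuclideanSpace ℝ (Fin d)) (x : EuclideanSpace ℝ (Fin d))
    (y : Fin m → ℝ) (ε : ℝ) (hε : 0 ≤ ε) :
    (⨆ r : {r : EuclideanSpace ℝ (Fin d) // ‖r‖ ≤ ε},
        ∑ j, max 0 (1 - y j * ⟪w j, x + (r : EuclideanSpace ℝ (Fin d))⟫)) ≤
      (∑ j, max 0 (1 - y j * ⟪w j, x⟫)) +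
        ε * ⨆ b : Fin m → Bool, ‖∑ j, if b j then y j • w j else 0‖ := by
  have : Nonempty {r : EuclideanSpace ℝ (Fin d) // ‖r‖ ≤ ε} := ⟨⟨0, by simpa using hε⟩⟩
  have hC : 0 ≤ ⨆ b : Fin m → Bool, ‖∑ j, if b j then y j • w j else 0‖ :=
    Real.iSup_nonneg fun _ => norm_nonneg _
  refine ciSup_le fun ⟨r, hr⟩ => ?_
  calc ∑ j, max 0 (1 - y j * ⟪w j, x + r⟫)
      ≤ ∑ j, (max 0 (1 - y j * ⟪w j, x⟫) + max 0 ⟪y j • w j, -r⟫) :=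
        Finset.sum_le_sum fun j _ => max_zero_one_sub_mul_inner_add_le _ _ _ _
    _ = (∑ j, max 0 (1 - y j * ⟪w j, x⟫)) + ∑ j, max 0 ⟪y j • w j, -r⟫ :=
        Finset.sum_add_distrib
    _ ≤ (∑ j, max 0 (1 - y j * ⟪w j, x⟫)) +
        ‖-r‖ * ⨆ b : Fin m → Bool, ‖∑ j, if b j then y j • w j else 0‖ := by
      gcongr; exact sum_max_zero_inner_le_norm_mul_iSup _ _
    _ ≤ _ := by rw [norm_neg]; gcongr

/-- Per-instance adversarial hinge-loss bound: the worst-case multi-label hinge loss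
under an `ℓ₂`-bounded perturbation of the input is at most the clean hinge loss plus
`ε` times the transferability quantity `C_{W,z} = max_{b ∈ {0,1}^m} ‖∑ j, b j • (y j • w j)‖₂`. -/
theorem adversarial_hinge_loss_le_clean_add_transferability
    {d m : ℕ} (w : Fin m → EuclideanSpace ℝ (Fin d)) (x : EuclideanSpace ℝ (Fin d))
    (y : Fin m → ℝ) (hy : ∀ j, y j = 1 ∨ y j = -1) (ε : ℝ) (hε : 0 ≤ ε) :
    (⨆ r : {r : EuclideanSpace ℝ (Fin d) // ‖r‖ ≤ ε},
        ∑ j, max 0 (1 - y j * ⟪w j, x + (r : EuclideanSpace ℝ (Fin d))⟫)) ≤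
      (∑ j, max 0 (1 - y j * ⟪w j, x⟫)) +
        ε * ⨆ b : Fin m → Bool, ‖∑ j, if b j then y j • w j else 0‖ :=
  adversarial_hinge_loss_le_clean_add_transferability_general w x y ε hε
end

section
/- Let d ≥ 1 and let a_1, …, a_m be vectors in the Euclidean space ℝ^d. Then the supremum over all r ∈ ℝ^d with ‖r‖₂ = 1 of ∑_{j=1}^m max(⟨r, a_j⟩, 0) equals the maximum over b ∈ {0,1}^m of ‖∑_{j=1}^m b_j a_j‖₂. -/
/-!
The sum `∑ j, max ⟪r, a j⟫ 0` is the inner product of `r` with the partial sum of those `a j`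
that make a positive angle with `r`, so for a unit vector `r` it is at most the norm of that
partial sum (Cauchy–Schwarz). Conversely, for any partial sum `s`, the unit vector `r` in the
direction of `s` gives `‖s‖ = ⟪r, s⟫ ≤ ∑ j, max ⟪r, a j⟫ 0`. Each family thus dominates the
other, so their suprema coincide.
-/

open scoped RealInnerProductSpace
open Set

section

variable {E : Type*} [NormedAddCommGroup E] [InnerProductSpace ℝ E]

theorem exists_norm_eq_one_real_inner_eq_norm [Nontrivial E] (s : E) :
    ∃ r : E, ‖r‖ = 1 ∧ ⟪r, s⟫ = ‖s‖ := by
  by_cases hs : s = 0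
  · obtain ⟨r, hr⟩ := exists_norm_eq E zero_le_one
    exact ⟨r, hr, by simp [hs]⟩
  · refine ⟨NormedSpace.normalize s, NormedSpace.norm_normalize hs, ?_⟩
    rw [NormedSpace.normalize, real_inner_smul_left, real_inner_self_eq_norm_sq,
      inv_mul_eq_div, pow_two, mul_self_div_self]

variable {ι : Type*} [Fintype ι] (a : ι → E)

theorem real_inner_sum_ite (r : E) (b : ι → Bool) :
    ⟪r, ∑ j, if b j then a j else 0⟫ = ∑ j, if b j then ⟪r, a j⟫ else 0 := by
  simp only [inner_sum, apply_ite (inner ℝ r), inner_zero_right]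

theorem real_inner_sum_ite_le_sum_max_inner (r : E) (b : ι → Bool) :
    ⟪r, ∑ j, if b j then a j else 0⟫ ≤ ∑ j, max ⟪r, a j⟫ 0 := by
  rw [real_inner_sum_ite]
  gcongr with j
  split_ifs
  exacts [le_max_left _ _, le_max_right _ _]

theorem sum_max_inner_eq_real_inner_sum_ite_pos (r : E) :
    ∑ j, max ⟪r, a j⟫ 0 = ⟪r, ∑ j, if decide (0 < ⟪r, a j⟫) then a j else 0⟫ := by
  rw [real_inner_sum_ite]
  refine Finset.sum_congr rfl fun j _ => ?_
  by_cases h : 0 < ⟪r, a j⟫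
  · simp [h, h.le]
  · simp [h, not_lt.mp h]

theorem exists_sum_max_inner_le_norm_sum_ite {r : E} (hr : ‖r‖ ≤ 1) :
    ∃ b : ι → Bool, ∑ j, max ⟪r, a j⟫ 0 ≤ ‖∑ j, if b j then a j else 0‖ := by
  refine ⟨fun j => decide (0 < ⟪r, a j⟫), ?_⟩
  rw [sum_max_inner_eq_real_inner_sum_ite_pos]
  calc ⟪r, _⟫ ≤ ‖r‖ * _ := real_inner_le_norm _ _
    _ ≤ _ := mul_le_of_le_one_left (norm_nonneg _) hr

theorem exists_norm_eq_one_norm_sum_ite_le_sum_max_inner [Nontrivial E] (b : ι → Bool) :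
    ∃ r : E, ‖r‖ = 1 ∧ ‖∑ j, if b j then a j else 0‖ ≤ ∑ j, max ⟪r, a j⟫ 0 := by
  obtain ⟨r, hr, hrs⟩ := exists_norm_eq_one_real_inner_eq_norm (∑ j, if b j then a j else 0)
  exact ⟨r, hr, hrs ▸ real_inner_sum_ite_le_sum_max_inner a r b⟩

theorem iSup_sum_max_inner_sphere_eq_iSup_norm_sum_ite [Nontrivial E] :
    (⨆ r : {r : E // ‖r‖ = 1}, ∑ j, max ⟪(r : E), a j⟫ 0) =
      ⨆ b : ι → Bool, ‖∑ j, if b j then a j else 0‖ := by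
  have hle_subset : ∀ r : {r : E // ‖r‖ = 1}, ∃ b : ι → Bool,
      ∑ j, max ⟪(r : E), a j⟫ 0 ≤ ‖∑ j, if b j then a j else 0‖ :=
    fun r => exists_sum_max_inner_le_norm_sum_ite a r.2.le
  have hle_sphere : ∀ b : ι → Bool, ∃ r : {r : E // ‖r‖ = 1},
      ‖∑ j, if b j then a j else 0‖ ≤ ∑ j, max ⟪(r : E), a j⟫ 0 := fun b => by
    obtain ⟨r, hr, hle⟩ := exists_norm_eq_one_norm_sum_ite_le_sum_max_inner a b
    exact ⟨⟨r, hr⟩, hle⟩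
  obtain ⟨M, hM⟩ := (finite_range fun b : ι → Bool => ‖∑ j, if b j then a j else 0‖).bddAbove
  have : Nonempty {r : E // ‖r‖ = 1} := nonempty_subtype.2 (exists_norm_eq E zero_le_one)
  refine le_antisymm (ciSup_mono_of_forall_exists ⟨M, hM⟩ hle_subset)
    (ciSup_mono_of_forall_exists ⟨M, ?_⟩ hle_sphere)
  rintro _ ⟨r, rfl⟩
  obtain ⟨b, hb⟩ := hle_subset r
  exact hb.trans (hM (mem_range_self b))

end

/-- The Soft Attackability Estimator identity (Eq. (11) with `p = q = 2`): the supremum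
over unit directions `r` of `∑ j, max(⟪r, a j⟫, 0)` equals the maximum over subsets
`b ∈ {0,1}^m` of `‖∑ j, b j • a j‖₂`. -/
theorem sup_sum_posPart_inner_sphere_eq_max_subset_sum_norm
    {d m : ℕ} (hd : 1 ≤ d) (a : Fin m → EuclideanSpace ℝ (Fin d)) :
    (⨆ r : {r : EuclideanSpace ℝ (Fin d) // ‖r‖ = 1},
        ∑ j, max ⟪(r : EuclideanSpace ℝ (Fin d)), a j⟫ 0) =
      ⨆ b : Fin m → Bool, ‖∑ j, if b j then a j else 0‖ := by
  have : Nonempty (Fin d) := ⟨⟨0, hd⟩⟩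
  exact iSup_sum_max_inner_sphere_eq_iSup_norm_sum_ite a
end

section
/- Let d ≥ 1, let p ∈ (1, ∞) and let q be its conjugate exponent, i.e. 1/p + 1/q = 1. Let a_1, …, a_m be vectors in ℝ^d. Then the supremum over all r ∈ ℝ^d with ℓ_p-norm ‖r‖_p = 1 of ∑_{j=1}^m max(∑_{i=1}^d r_i (a_j)_i, 0) equals the maximum over b ∈ {0,1}^m of the ℓ_q-norm ‖∑_{j=1}^m b_j a_j‖_q. -/
/-! For fixed `r`, the sum of positive parts `∑ j, max ⟨r, a j⟩ 0` is the largest of the pairings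
`⟨r, ∑ j ∈ B, a j⟩`, attained at `B = {j | 0 < ⟨r, a j⟩}`. Exchanging the two suprema leaves, for
each `B`, the supremum of `⟨r, v⟩` over the `ℓ_p` unit sphere, which is `‖v‖_q` by Hölder's
inequality, with equality at `r ∝ sign v * |v| ^ (q - 1)`. -/

open Finset

namespace Real

theorem sign_mul_abs_rpow_sub_one_mul_self {q : ℝ} (hq : q ≠ 0) (x : ℝ) :
    SignType.sign x * |x| ^ (q - 1) * x = |x| ^ q := by
  rcases eq_or_ne x 0 with rfl | hx
  · simp [zero_rpow hq]
  · have hx' : |x| ≠ 0 := abs_ne_zero.2 hx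
    rw [mul_right_comm, sign_mul_self, rpow_sub_one hx', mul_div_cancel₀ _ hx']

theorem HolderConjugate.abs_sign_mul_abs_rpow_sub_one_rpow {p q : ℝ} (hpq : p.HolderConjugate q)
    (x : ℝ) : |SignType.sign x * |x| ^ (q - 1)| ^ p = |x| ^ q := by
  rcases eq_or_ne x 0 with rfl | hx
  · simp [zero_rpow hpq.ne_zero, zero_rpow hpq.symm.ne_zero]
  · have hsign : |(SignType.sign x : ℝ)| = 1 := by rcases lt_or_gt_of_ne hx with h | h <;> simp [h]
    rw [abs_mul, hsign, one_mul, abs_of_nonneg (rpow_nonneg (abs_nonneg x) _),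
      ← rpow_mul (abs_nonneg x), hpq.symm.sub_one_mul_conj]

end Real

variable {ι : Type*} [Fintype ι] {p q : ℝ}

theorem Real.HolderConjugate.exists_lp_norm_eq_one_sum_mul_eq_lq_norm (hpq : p.HolderConjugate q)
    {v : ι → ℝ} (hv : v ≠ 0) :
    ∃ r : ι → ℝ, (∑ i, |r i| ^ p) ^ (1 / p) = 1 ∧
      ∑ i, r i * v i = (∑ i, |v i| ^ q) ^ (1 / q) := by
  set S := ∑ i, |v i| ^ q
  have hS : 0 < S := by
    obtain ⟨i, hi⟩ := Function.ne_iff.1 hv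
    exact sum_pos' (fun i _ ↦ by positivity) ⟨i, mem_univ i, Real.rpow_pos_of_pos (abs_pos.2 hi) q⟩
  -- normalise the equality case `sign v * |v| ^ (q - 1)` of Hölder's inequality
  set c := (S ^ (1 / p))⁻¹
  have hc : 0 ≤ c := by positivity
  refine ⟨fun i ↦ c * (SignType.sign (v i) * |v i| ^ (q - 1)), ?_, ?_⟩
  · have hcp : c ^ p = S⁻¹ := by
      rw [Real.inv_rpow (by positivity), one_div, Real.rpow_inv_rpow hS.le hpq.ne_zero]
    have hterm (i : ι) : |c * (SignType.sign (v i) * |v i| ^ (q - 1))| ^ p = S⁻¹ * |v i| ^ q := by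
      rw [abs_mul, abs_of_nonneg hc, Real.mul_rpow hc (abs_nonneg _), hcp,
        hpq.abs_sign_mul_abs_rpow_sub_one_rpow]
    simp_rw [hterm]
    rw [← mul_sum, inv_mul_cancel₀ hS.ne', Real.one_rpow]
  · simp_rw [mul_assoc c, ← mul_sum, Real.sign_mul_abs_rpow_sub_one_mul_self hpq.symm.ne_zero]
    rw [inv_mul_eq_div, one_div q, ← hpq.one_sub_inv, Real.rpow_sub hS, Real.rpow_one, one_div]

theorem Real.HolderConjugate.sum_mul_le_of_lp_norm_eq_one (hpq : p.HolderConjugate q)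
    {r : ι → ℝ} (hr : (∑ i, |r i| ^ p) ^ (1 / p) = 1) (v : ι → ℝ) :
    ∑ i, r i * v i ≤ (∑ i, |v i| ^ q) ^ (1 / q) := by
  simpa only [hr, one_mul] using Real.inner_le_Lp_mul_Lq univ r v hpq

theorem Real.HolderConjugate.iSup_lp_sphere_sum_mul_eq_lq_norm (hpq : p.HolderConjugate q)
    (v : ι → ℝ) :
    ⨆ r : {r : ι → ℝ // (∑ i, |r i| ^ p) ^ (1 / p) = 1}, ∑ i, (r : ι → ℝ) i * v i =
      (∑ i, |v i| ^ q) ^ (1 / q) := by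
  rcases eq_or_ne v 0 with rfl | hv
  · simp [Real.zero_rpow hpq.symm.ne_zero, Real.zero_rpow hpq.symm.inv_ne_zero]
  obtain ⟨r, hr, hrv⟩ := hpq.exists_lp_norm_eq_one_sum_mul_eq_lq_norm hv
  refine le_antisymm ?_ ?_
  · have : Nonempty {r : ι → ℝ // (∑ i, |r i| ^ p) ^ (1 / p) = 1} := ⟨⟨r, hr⟩⟩
    exact ciSup_le fun r ↦ hpq.sum_mul_le_of_lp_norm_eq_one r.2 v
  · exact le_ciSup_of_le ⟨_, Set.forall_mem_range.2 fun r ↦ hpq.sum_mul_le_of_lp_norm_eq_one r.2 v⟩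
      ⟨r, hr⟩ hrv.ge

variable {κ : Type*} [Fintype κ]

theorem sum_ite_le_sum_max_zero (x : κ → ℝ) (b : κ → Bool) :
    ∑ j, (if b j then x j else 0) ≤ ∑ j, max (x j) 0 :=
  sum_le_sum fun j _ ↦ by split_ifs <;> simp

theorem exists_sum_ite_eq_sum_max_zero (x : κ → ℝ) :
    ∃ b : κ → Bool, ∑ j, (if b j then x j else 0) = ∑ j, max (x j) 0 :=
  ⟨fun j ↦ decide (0 < x j), sum_congr rfl fun j _ ↦ by
    by_cases h : 0 < x j
    · simp [h, h.le]
    · simp [h, not_lt.1 h]⟩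

theorem sum_mul_sum_ite (r : ι → ℝ) (a : κ → ι → ℝ) (b : κ → Bool) :
    ∑ i, r i * (∑ j, if b j then a j i else 0) = ∑ j, if b j then ∑ i, r i * a j i else 0 := by
  simp_rw [mul_sum, mul_ite, mul_zero]
  rw [sum_comm]
  simp_rw [sum_ite_irrel, sum_const_zero]

theorem sup_sum_posPart_pairing_lp_sphere_eq_max_subset_sum_lq_norm_general
    {d m : ℕ} (p q : ℝ) (hp : 1 < p) (hpq : 1 / p + 1 / q = 1)
    (a : Fin m → Fin d → ℝ) :
    (⨆ r : {r : Fin d → ℝ // (∑ i, |r i| ^ p) ^ (1 / p) = 1},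
        ∑ j, max (∑ i, (r : Fin d → ℝ) i * a j i) 0) =
      ⨆ b : Fin m → Bool, (∑ i, |∑ j, if b j then a j i else 0| ^ q) ^ (1 / q) := by
  have hpq' : p.HolderConjugate q :=
    Real.holderConjugate_iff.2 ⟨hp, by simpa only [one_div] using hpq⟩
  set s : (Fin m → Bool) → Fin d → ℝ := fun b i ↦ ∑ j, if b j then a j i else 0
  have hbound (r : {r : Fin d → ℝ // (∑ i, |r i| ^ p) ^ (1 / p) = 1}) :
      ∑ j, max (∑ i, (r : Fin d → ℝ) i * a j i) 0 ≤ ⨆ b, (∑ i, |s b i| ^ q) ^ (1 / q) := by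
    obtain ⟨b, hb⟩ := exists_sum_ite_eq_sum_max_zero fun j ↦ ∑ i, (r : Fin d → ℝ) i * a j i
    rw [← hb, ← sum_mul_sum_ite]
    exact (hpq'.sum_mul_le_of_lp_norm_eq_one r.2 (s b)).trans
      (le_ciSup (Finite.bddAbove_range fun b ↦ (∑ i, |s b i| ^ q) ^ (1 / q)) b)
  refine le_antisymm (Real.iSup_le hbound (Real.iSup_nonneg fun _ ↦ by positivity)) ?_
  refine Real.iSup_le (fun b ↦ ?_) (Real.iSup_nonneg fun _ ↦ sum_nonneg fun _ _ ↦ le_max_right _ _)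
  rw [← hpq'.iSup_lp_sphere_sum_mul_eq_lq_norm]
  exact ciSup_mono ⟨_, Set.forall_mem_range.2 hbound⟩ fun r ↦
    (sum_mul_sum_ite _ a b).trans_le (sum_ite_le_sum_max_zero _ b)

/-- The dual-norm identity of Eq. (11) of the paper for general conjugate exponents
`p, q`: the supremum over `ℓ_p`-unit directions `r` of `∑ j, max(∑ i, r i * a j i, 0)`
equals the maximum over `b ∈ {0,1}^m` of the `ℓ_q`-norm of `∑ j, b j • a j`. -/
theorem sup_sum_posPart_pairing_lp_sphere_eq_max_subset_sum_lq_norm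
    {d m : ℕ} (hd : 1 ≤ d) (p q : ℝ) (hp : 1 < p) (hpq : 1 / p + 1 / q = 1)
    (a : Fin m → Fin d → ℝ) :
    (⨆ r : {r : Fin d → ℝ // (∑ i, |r i| ^ p) ^ (1 / p) = 1},
        ∑ j, max (∑ i, (r : Fin d → ℝ) i * a j i) 0) =
      ⨆ b : Fin m → Bool, (∑ i, |∑ j, if b j then a j i else 0| ^ q) ^ (1 / q) :=
  sup_sum_posPart_pairing_lp_sphere_eq_max_subset_sum_lq_norm_general p q hp hpq a
end
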